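/- If 0 < ℓ < W(3/2), then the tube radius satisfies cosh(r₀(ℓ)) > 2. -/

import Mathlib

/-- Inverse hyperbolic cosine: `arcosh y = log (y + √(y² - 1))` for `y ≥ 1`. -/
noncomputable def arcosh (y : ℝ) : ℝ := Real.log (y + Real.sqrt (y ^ 2 - 1))

/-- The function `W` from the paper. -/
noncomputable def W (x : ℝ) : ℝ :=
  (Real.sqrt 3 / (4 * Real.pi)) *
    (arcosh (1 + 1 / (1 + Real.sqrt (1 + (8 * x ^ 2 - 8 * x + 1) ^ 2)))) ^ 2

/-- The function `κ(ℓ) = cosh(√(4πℓ/√3)) - 1`. -/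
noncomputable def κ (ℓ : ℝ) : ℝ :=
  Real.cosh (Real.sqrt (4 * Real.pi * ℓ / Real.sqrt 3)) - 1

/-- The tube radius `r₀(ℓ)`, the positive real with
`cosh²(r₀(ℓ)) = (1/2)(√(1 - 2κ(ℓ))/κ(ℓ) + 1)`. -/
noncomputable def r₀ (ℓ : ℝ) : ℝ :=
  arcosh (Real.sqrt ((1 / 2) * (Real.sqrt (1 - 2 * κ ℓ) / κ ℓ + 1)))

/-!
Since `W x = (√3/(4π)) arcosh(1 + 1/(1 + √(1 + a²)))²` with `a = 8x² - 8x + 1`, the bound `ℓ < W x`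
says that `κ = κ(ℓ)` satisfies `κ (1 + √(1 + a²)) < 1`, i.e. `√(1 + a²) κ < 1 - κ`. Squaring gives
`a² κ² < 1 - 2κ`, so `√(1 - 2κ)/κ > a`. For `x = 3/2` we have `a = 7`, hence
`cosh² r = (√(1 - 2κ)/κ + 1)/2 > 4`.
-/

lemma arcosh_eq_real_arcosh : arcosh = Real.arcosh := rfl

lemma κ_pos {ℓ : ℝ} (hℓ : 0 < ℓ) : 0 < κ ℓ := by
  have ht : √(4 * Real.pi * ℓ / √3) ≠ 0 := (Real.sqrt_pos.2 (by positivity)).ne'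
  simpa [κ] using Real.one_lt_cosh.2 ht

lemma κ_lt_of_lt_W {x ℓ : ℝ} (h : ℓ < W x) :
    κ ℓ < 1 / (1 + √(1 + (8 * x ^ 2 - 8 * x + 1) ^ 2)) := by
  rw [W, arcosh_eq_real_arcosh] at h
  set y := 1 + 1 / (1 + √(1 + (8 * x ^ 2 - 8 * x + 1) ^ 2))
  have hy : 1 < y := lt_add_of_pos_right 1 (by positivity)
  have ht : √(4 * Real.pi * ℓ / √3) < Real.arcosh y := by
    rw [Real.sqrt_lt' (Real.arcosh_pos hy), div_lt_iff₀ (by positivity)]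
    calc 4 * Real.pi * ℓ < 4 * Real.pi * (√3 / (4 * Real.pi) * Real.arcosh y ^ 2) := by gcongr
      _ = Real.arcosh y ^ 2 * √3 := by field_simp
  have hcosh : Real.cosh √(4 * Real.pi * ℓ / √3) < y := by
    rw [← Real.cosh_arcosh hy.le, Real.cosh_lt_cosh, abs_of_nonneg (Real.sqrt_nonneg _),
      abs_of_pos (Real.arcosh_pos hy)]
    exact ht
  rw [κ]
  linarith

lemma mul_lt_sqrt_one_sub_two_mul {a k : ℝ} (hk : 0 ≤ k) (h : k < 1 / (1 + √(1 + a ^ 2))) :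
    a * k < √(1 - 2 * k) := by
  have hs : √(1 + a ^ 2) ^ 2 = 1 + a ^ 2 := Real.sq_sqrt (by positivity)
  have hlt : √(1 + a ^ 2) * k < 1 - k := by
    rw [lt_div_iff₀ (by positivity)] at h
    linarith
  have hsq := mul_self_lt_mul_self (mul_nonneg (Real.sqrt_nonneg _) hk) hlt
  refine Real.lt_sqrt_of_sq_lt ?_
  nlinarith

theorem cosh_tube_radius_gt_two_general (ℓ : ℝ) (h0 : 0 < ℓ) (h1 : ℓ < W (3 / 2))
    (r : ℝ)
    (hcosh : (Real.cosh r) ^ 2 = (1 / 2) * (Real.sqrt (1 - 2 * κ ℓ) / κ ℓ + 1)) :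
    Real.cosh r > 2 := by
  have hκ := κ_pos h0
  have h7 : 7 * κ ℓ < √(1 - 2 * κ ℓ) := by
    have := mul_lt_sqrt_one_sub_two_mul hκ.le (κ_lt_of_lt_W h1)
    norm_num at this
    exact this
  have hratio : 7 < √(1 - 2 * κ ℓ) / κ ℓ := by rwa [lt_div_iff₀ hκ]
  have hsq : 2 ^ 2 < Real.cosh r ^ 2 := by rw [hcosh]; linarith
  exact lt_of_pow_lt_pow_left₀ 2 (Real.cosh_pos r).le hsq

theorem cosh_tube_radius_gt_two (ℓ : ℝ) (h0 : 0 < ℓ) (h1 : ℓ < W (3 / 2))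
    (r : ℝ) (hr : 0 < r)
    (hcosh : (Real.cosh r) ^ 2 = (1 / 2) * (Real.sqrt (1 - 2 * κ ℓ) / κ ℓ + 1)) :
    Real.cosh r > 2 :=
  cosh_tube_radius_gt_two_general ℓ h0 h1 r hcosh
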